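/- arXiv:2204.02715 — 7 statements merged into one kernel-verified Lean document; each statement's English description precedes it below -/
import Mathlib

section
/- Let f, g : ℝ → ℝ be measurable functions satisfying |f(y)| ≤ C₁/(1+y²) and |g(y)| ≤ C₁/(1+y²) for all y. Then there exists a constant C₀ (depending only on C₁) such that for all real x₁, x₂ with |x₁ - x₂| ≥ 1, the L² norm of y ↦ f(y - x₁)·g(y - x₂) is at most C₀ / (x₁ - x₂)². -/
/-!
With `h t = (1 + t²)⁻¹`, the elementary inequality
`h a * h b ≤ 2 / (1 + (a - b)²) * (h a + h b)` bounds `|f (y - x₁) * g (y - x₂)|` pointwise by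
`2 C₁² / (1 + (x₁ - x₂)²)` times a sum of two translates of `h`. Translation does not change
L² norms, and `‖h‖₂² ≤ ‖h‖₁ = π ≤ 4` because `h ≤ 1`.
-/

open MeasureTheory

lemma inv_one_add_sq_mul_inv_one_add_sq_le (a b : ℝ) :
    (1 + a ^ 2)⁻¹ * (1 + b ^ 2)⁻¹ ≤ 2 / (1 + (a - b) ^ 2) * ((1 + a ^ 2)⁻¹ + (1 + b ^ 2)⁻¹) := by
  have hsum : (1 + a ^ 2)⁻¹ + (1 + b ^ 2)⁻¹ = (1 + a ^ 2)⁻¹ * (1 + b ^ 2)⁻¹ * (2 + a ^ 2 + b ^ 2) := by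
    field_simp
    ring
  have hdiff : 1 + (a - b) ^ 2 ≤ 2 * (2 + a ^ 2 + b ^ 2) := by nlinarith [sq_nonneg (a + b)]
  rw [hsum, ← mul_assoc, mul_comm _ ((1 + a ^ 2)⁻¹ * (1 + b ^ 2)⁻¹), mul_assoc]
  refine le_mul_of_one_le_right (by positivity) ?_
  rw [div_mul_eq_mul_div, one_le_div (by positivity)]
  exact hdiff

lemma eLpNorm_one_inv_one_add_sq :
    eLpNorm (fun t : ℝ => (1 + t ^ 2)⁻¹) 1 volume = ENNReal.ofReal Real.pi := by
  rw [eLpNorm_one_eq_lintegral_enorm, ← integral_univ_inv_one_add_sq,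
    ofReal_integral_eq_lintegral_ofReal integrable_inv_one_add_sq
      (Filter.Eventually.of_forall fun t => by positivity)]
  exact lintegral_congr fun t => Real.enorm_eq_ofReal (by positivity)

lemma eLpNorm_two_inv_one_add_sq_le :
    eLpNorm (fun t : ℝ => (1 + t ^ 2)⁻¹) 2 volume ≤ ENNReal.ofReal 2 := by
  set h : ℝ → ℝ := fun t => (1 + t ^ 2)⁻¹
  have hsq_le : ∀ t, ‖‖h t‖ ^ (2 : ℝ)‖ ≤ h t := fun t => by
    have h0 : 0 ≤ h t := by positivity
    have h1 : h t ≤ 1 := inv_le_one_of_one_le₀ (by nlinarith [sq_nonneg t])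
    rw [Real.norm_of_nonneg (by positivity), Real.norm_of_nonneg h0, Real.rpow_two]
    nlinarith
  have hpow : eLpNorm h 2 volume ^ (2 : ℝ) ≤ ENNReal.ofReal 2 ^ (2 : ℝ) := calc
    eLpNorm h 2 volume ^ (2 : ℝ) = eLpNorm (fun t => ‖h t‖ ^ (2 : ℝ)) 1 volume := by
      rw [eLpNorm_norm_rpow h two_pos]
      norm_num
    _ ≤ eLpNorm h 1 volume := eLpNorm_mono_real hsq_le
    _ = ENNReal.ofReal Real.pi := eLpNorm_one_inv_one_add_sq
    _ ≤ ENNReal.ofReal 2 ^ (2 : ℝ) := by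
      rw [ENNReal.ofReal_rpow_of_nonneg (by norm_num) (by norm_num)]
      exact ENNReal.ofReal_le_ofReal (by linarith [Real.pi_le_four])
  exact (ENNReal.rpow_le_rpow_iff two_pos).1 hpow

lemma eLpNorm_comp_sub_right {G E : Type*} [MeasurableSpace G] [AddGroup G] [MeasurableAdd G]
    [NormedAddCommGroup E] {μ : Measure G} [μ.IsAddRightInvariant] {h : G → E}
    (hh : AEStronglyMeasurable h μ) (p : ENNReal) (x : G) :
    eLpNorm (fun y => h (y - x)) p μ = eLpNorm h p μ :=
  eLpNorm_comp_measurePreserving hh (measurePreserving_sub_right μ x)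

lemma eLpNorm_translate_mul_le {f g : ℝ → ℝ} {C : ℝ}
    (hf : ∀ y, |f y| ≤ C / (1 + y ^ 2)) (hg : ∀ y, |g y| ≤ C / (1 + y ^ 2)) (x₁ x₂ : ℝ) :
    eLpNorm (fun y => f (y - x₁) * g (y - x₂)) 2 volume
      ≤ ENNReal.ofReal (8 * C ^ 2 / (1 + (x₁ - x₂) ^ 2)) := by
  set h : ℝ → ℝ := fun t => (1 + t ^ 2)⁻¹
  set c : ℝ := 2 * C ^ 2 / (1 + (x₁ - x₂) ^ 2)
  have hc : 0 ≤ c := by positivity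
  have hh : Continuous h := by fun_prop (disch := intro t; positivity)
  have hpoint : ∀ y, ‖f (y - x₁) * g (y - x₂)‖ ≤ (c • fun y => h (y - x₁) + h (y - x₂)) y := by
    intro y
    have hdiff : ((y - x₁) - (y - x₂)) ^ 2 = (x₁ - x₂) ^ 2 := by ring
    calc ‖f (y - x₁) * g (y - x₂)‖ = |f (y - x₁)| * |g (y - x₂)| := by
          rw [Real.norm_eq_abs, abs_mul]
      _ ≤ C / (1 + (y - x₁) ^ 2) * (C / (1 + (y - x₂) ^ 2)) :=
          mul_le_mul (hf _) (hg _) (abs_nonneg _) ((abs_nonneg _).trans (hf _))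
      _ = C ^ 2 * (h (y - x₁) * h (y - x₂)) := by simp only [h]; ring
      _ ≤ C ^ 2 * (2 / (1 + (x₁ - x₂) ^ 2) * (h (y - x₁) + h (y - x₂))) := by
          rw [← hdiff]
          exact mul_le_mul_of_nonneg_left
            (inv_one_add_sq_mul_inv_one_add_sq_le _ _) (sq_nonneg C)
      _ = (c • fun y => h (y - x₁) + h (y - x₂)) y := by
          simp only [c, Pi.smul_apply, smul_eq_mul]; ring
  have htranslate (x : ℝ) : eLpNorm (fun y => h (y - x)) 2 volume ≤ ENNReal.ofReal 2 := by
    rw [eLpNorm_comp_sub_right hh.aestronglyMeasurable]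
    exact eLpNorm_two_inv_one_add_sq_le
  calc eLpNorm (fun y => f (y - x₁) * g (y - x₂)) 2 volume
      ≤ eLpNorm (c • fun y => h (y - x₁) + h (y - x₂)) 2 volume := eLpNorm_mono_real hpoint
    _ = ENNReal.ofReal c * eLpNorm ((fun y => h (y - x₁)) + fun y => h (y - x₂)) 2 volume := by
      rw [eLpNorm_const_smul, Real.enorm_eq_ofReal hc]
      rfl
    _ ≤ ENNReal.ofReal c * (ENNReal.ofReal 2 + ENNReal.ofReal 2) := by
      gcongr
      refine (eLpNorm_add_le ?_ ?_ one_le_two).trans (add_le_add (htranslate x₁) (htranslate x₂))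
        <;> exact (hh.comp (continuous_sub_right _)).aestronglyMeasurable
    _ = ENNReal.ofReal (8 * C ^ 2 / (1 + (x₁ - x₂) ^ 2)) := by
      rw [← ENNReal.ofReal_add zero_le_two zero_le_two, ← ENNReal.ofReal_mul hc]
      congr 1
      ring

theorem stmt1 (C₁ : ℝ) (hC₁ : 0 < C₁) :
    ∃ C₀ > 0, ∀ f g : ℝ → ℝ, Measurable f → Measurable g →
      (∀ y : ℝ, |f y| ≤ C₁ / (1 + y ^ 2)) → (∀ y : ℝ, |g y| ≤ C₁ / (1 + y ^ 2)) →
      ∀ x₁ x₂ : ℝ, 1 ≤ |x₁ - x₂| →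
        eLpNorm (fun y => f (y - x₁) * g (y - x₂)) 2 volume
          ≤ ENNReal.ofReal (C₀ / (x₁ - x₂) ^ 2) := by
  refine ⟨8 * C₁ ^ 2, by positivity, fun f g _ _ hf hg x₁ x₂ hdist => ?_⟩
  have hd : 1 ≤ (x₁ - x₂) ^ 2 := by
    rw [← sq_abs]
    exact one_le_pow₀ hdist
  refine (eLpNorm_translate_mul_le hf hg x₁ x₂).trans (ENNReal.ofReal_le_ofReal ?_)
  exact div_le_div_of_nonneg_left (by positivity) (by linarith) (by linarith)
end

section
/- Let n = 2k be even and let θ₁,...,θ_{2k} > 0 with θ_{2k+1-i} = θ_i. For every integer i with 1 ≤ i < 2k, the inequality Σ_{ℓ=1}^{2k-i+1} 1/(θ_ℓ + ⋯ + θ_{ℓ+i-1})² - Σ_{ℓ=1}^{2k-i} 1/(θ_ℓ + ⋯ + θ_{ℓ+i})² ≥ 1/(θ_{2k-i+1} + ⋯ + θ_{2k})² holds. -/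
theorem stmt5 (k : ℕ) (hk : 1 ≤ k) (θ : ℕ → ℝ)
    (hpos : ∀ ℓ, 1 ≤ ℓ → ℓ ≤ 2 * k → 0 < θ ℓ)
    (hsym : ∀ i, 1 ≤ i → i ≤ 2 * k → θ (2 * k + 1 - i) = θ i)
    (i : ℕ) (hi1 : 1 ≤ i) (hi2 : i < 2 * k) :
    (∑ ℓ ∈ Finset.Icc 1 (2 * k - i + 1), 1 / (∑ m ∈ Finset.Icc ℓ (ℓ + i - 1), θ m) ^ 2)
      - (∑ ℓ ∈ Finset.Icc 1 (2 * k - i), 1 / (∑ m ∈ Finset.Icc ℓ (ℓ + i), θ m) ^ 2)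
      ≥ 1 / (∑ m ∈ Finset.Icc (2 * k - i + 1) (2 * k), θ m) ^ 2 := by
  rw [Finset.sum_Icc_succ_top (by omega : 1 ≤ 2 * k - i + 1)]
  have hlast : Finset.Icc (2 * k - i + 1) (2 * k - i + 1 + i - 1)
      = Finset.Icc (2 * k - i + 1) (2 * k) := by
    congr 1; omega
  rw [hlast]
  have key : ∀ ℓ ∈ Finset.Icc 1 (2 * k - i),
      1 / (∑ m ∈ Finset.Icc ℓ (ℓ + i), θ m) ^ 2
        ≤ 1 / (∑ m ∈ Finset.Icc ℓ (ℓ + i - 1), θ m) ^ 2 := by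
    intro ℓ hℓ
    simp only [Finset.mem_Icc] at hℓ
    have hA : 0 < ∑ m ∈ Finset.Icc ℓ (ℓ + i - 1), θ m := by
      apply Finset.sum_pos
      · intro m hm
        simp only [Finset.mem_Icc] at hm
        exact hpos m (by omega) (by omega)
      · exact Finset.nonempty_Icc.mpr (by omega)
    have hAB : (∑ m ∈ Finset.Icc ℓ (ℓ + i - 1), θ m)
        ≤ ∑ m ∈ Finset.Icc ℓ (ℓ + i), θ m := by
      apply Finset.sum_le_sum_of_subset_of_nonneg
      · exact Finset.Icc_subset_Icc_right (by omega)
      · intro m hm _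
        simp only [Finset.mem_Icc] at hm
        exact le_of_lt (hpos m (by omega) (by omega))
    apply one_div_le_one_div_of_le (by positivity)
    exact pow_le_pow_left₀ hA.le hAB 2
  have hsum := Finset.sum_le_sum key
  linarith
end

section
/- Let M = (m_{ij}) be the n×n symmetric matrix with m_{ij} = -3a_{ij}/(α_i - α_j)⁴ for i ≠ j and m_{ii} = Σ_{j≠i} 3a_{ij}/(α_i - α_j)⁴, where α₁ > ⋯ > α_n satisfy α_i/4 = Σ_{j≠i} a_{ij}/(α_i - α_j)³ for all i. Then the vector (α₁,...,α_n) is an eigenvector of M with eigenvalue 3/4. -/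
theorem stmt6 (n : ℕ) (a : Fin n → Fin n → ℝ) (hsym : ∀ i j, a i j = a j i)
    (α : Fin n → ℝ) (hanti : StrictAnti α)
    (hstat : ∀ i, α i / 4 = ∑ j ∈ Finset.univ.filter (fun j => j ≠ i), a i j / (α i - α j) ^ 3)
    (M : Matrix (Fin n) (Fin n) ℝ)
    (hM : ∀ i j, M i j =
      if i = j then ∑ l ∈ Finset.univ.filter (fun l => l ≠ i), 3 * a i l / (α i - α l) ^ 4
      else -3 * a i j / (α i - α j) ^ 4) :
    M.mulVec α = (3 / 4 : ℝ) • α := by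
  funext i
  have hne : ∀ j : Fin n, j ≠ i → α i - α j ≠ 0 := fun j hj =>
    sub_ne_zero.mpr fun h => hj (hanti.injective h.symm)
  have key : ∑ j, M i j * α j
      = ∑ j ∈ Finset.univ.filter (fun j => j ≠ i), 3 * (a i j / (α i - α j) ^ 3) := by
    rw [← Finset.add_sum_erase _ _ (Finset.mem_univ i), hM i i, if_pos rfl,
        Finset.sum_mul, ← Finset.filter_ne' Finset.univ i, ← Finset.sum_add_distrib]
    apply Finset.sum_congr rfl
    intro j hj
    rw [Finset.mem_filter] at hj
    rw [hM i j, if_neg (fun h => hj.2 h.symm)]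
    have hd := hne j hj.2
    field_simp
    ring
  simp only [Matrix.mulVec, dotProduct, Pi.smul_apply, smul_eq_mul]
  rw [key, ← Finset.mul_sum, ← hstat i]
  ring
end

section
/- Let e₀ > 0, C > 0, and let a : [T₀, t_in] → ℝ be differentiable with a(t_in) = 0 and |a'(s) - e₀ a(s)| ≤ C s^{-2} for all s in [T₀, t_in]. Then there is a constant C' depending only on e₀ and C (not on t_in) such that |a(t)| ≤ C' t^{-2} for all t in [T₀, t_in] with T₀ ≥ 1. -/
/-! With `g s = exp (-e₀ s) a s` the inequality becomes `|g'(s)| ≤ K exp (-e₀ s)` on `[t, tin]`,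
where `K = C / t²` bounds the forcing there. Integrating backwards from `g tin = 0` gives
`|g t| ≤ (K / e₀) exp (-e₀ t)`, i.e. `|a t| ≤ K / e₀ = (C / e₀) / t²`: the unstable growth
`exp (e₀ t)` is exactly cancelled by the decay of the integral, whatever the length of the
interval. -/

open Set

theorem abs_sub_le_sub_of_abs_deriv_le {g g' ψ ψ' : ℝ → ℝ} {t u : ℝ} (htu : t ≤ u)
    (hg : ∀ s ∈ Icc t u, HasDerivAt g (g' s) s) (hψ : ∀ s ∈ Icc t u, HasDerivAt ψ (ψ' s) s)
    (hle : ∀ s ∈ Ioo t u, |g' s| ≤ ψ' s) :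
    |g u - g t| ≤ ψ u - ψ t := by
  have key : ∀ c : ℝ, |c| = 1 → c * (g u - g t) ≤ ψ u - ψ t := by
    intro c hc
    have hderiv : ∀ s ∈ Icc t u, HasDerivAt (fun s => ψ s - c * g s) (ψ' s - c * g' s) s :=
      fun s hs => (hψ s hs).sub ((hg s hs).const_mul c)
    have hmono : MonotoneOn (fun s => ψ s - c * g s) (Icc t u) := by
      refine monotoneOn_of_hasDerivWithinAt_nonneg (f' := fun s => ψ' s - c * g' s) (convex_Icc t u)
        (fun s hs => (hderiv s hs).continuousAt.continuousWithinAt) (fun s hs => ?_)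
        (fun s hs => ?_)
      · rw [interior_Icc] at hs ⊢
        exact (hderiv s (Ioo_subset_Icc_self hs)).hasDerivWithinAt
      · rw [interior_Icc] at hs
        have : c * g' s ≤ ψ' s := calc
          c * g' s ≤ |c * g' s| := le_abs_self _
          _ = |g' s| := by rw [abs_mul, hc, one_mul]
          _ ≤ ψ' s := hle s hs
        linarith
    have := hmono (left_mem_Icc.2 htu) (right_mem_Icc.2 htu) htu
    simp only at this
    linarith
  rw [abs_sub_le_iff]
  constructor
  · simpa using key 1 (by simp)
  · simpa using key (-1) (by simp)

theorem abs_le_div_of_abs_deriv_sub_mul_le {a a' : ℝ → ℝ} {e K t u : ℝ} (he : 0 < e) (htu : t ≤ u)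
    (ha : ∀ s ∈ Icc t u, HasDerivAt a (a' s) s) (hau : a u = 0)
    (hK : ∀ s ∈ Icc t u, |a' s - e * a s| ≤ K) :
    |a t| ≤ K / e := by
  have hK0 : 0 ≤ K := (abs_nonneg _).trans (hK u (right_mem_Icc.2 htu))
  have hexp : ∀ s, HasDerivAt (fun s => Real.exp (-e * s)) (-e * Real.exp (-e * s)) s := fun s => by
    simpa [mul_comm] using ((hasDerivAt_id s).const_mul (-e)).exp
  have hg : ∀ s ∈ Icc t u, HasDerivAt (fun s => Real.exp (-e * s) * a s)
      (Real.exp (-e * s) * (a' s - e * a s)) s :=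
    fun s hs => ((hexp s).mul (ha s hs)).congr_deriv (by ring)
  have hψ : ∀ s ∈ Icc t u, HasDerivAt (fun s => -(K / e) * Real.exp (-e * s))
      (K * Real.exp (-e * s)) s :=
    fun s _ => ((hexp s).const_mul (-(K / e))).congr_deriv (by field_simp)
  have hincr := abs_sub_le_sub_of_abs_deriv_le htu hg hψ fun s hs => by
    rw [abs_mul, abs_of_pos (Real.exp_pos _), mul_comm]
    exact mul_le_mul_of_nonneg_right (hK s (Ioo_subset_Icc_self hs)) (Real.exp_pos _).le
  simp only [hau, mul_zero, zero_sub, abs_neg, abs_mul, abs_of_pos (Real.exp_pos _)] at hincr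
  have hψu : 0 ≤ K / e * Real.exp (-e * u) := by positivity
  have hinv : Real.exp (e * t) * Real.exp (-e * t) = 1 := by rw [← Real.exp_add]; simp
  calc |a t| = Real.exp (e * t) * (Real.exp (-e * t) * |a t|) := by rw [← mul_assoc, hinv, one_mul]
    _ ≤ Real.exp (e * t) * (K / e * Real.exp (-e * t)) :=
        mul_le_mul_of_nonneg_left (by linarith) (Real.exp_pos _).le
    _ = K / e := by rw [mul_left_comm, hinv, mul_one]

theorem stmt9 (e₀ C : ℝ) (he : 0 < e₀) (hC : 0 < C) :
    ∃ C' > 0, ∀ (T₀ tin : ℝ) (a a' : ℝ → ℝ), 1 ≤ T₀ → T₀ ≤ tin →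
      (∀ s ∈ Set.Icc T₀ tin, HasDerivAt a (a' s) s) →
      a tin = 0 →
      (∀ s ∈ Set.Icc T₀ tin, |a' s - e₀ * a s| ≤ C / s ^ 2) →
      ∀ t ∈ Set.Icc T₀ tin, |a t| ≤ C' / t ^ 2 := by
  refine ⟨C / e₀, by positivity, ?_⟩
  intro T₀ tin a a' hT₀ _ hderiv ha0 hbound t ⟨htT₀, httin⟩
  have ht : 0 < t := by linarith
  have hsub : Icc t tin ⊆ Icc T₀ tin := Icc_subset_Icc_left htT₀
  calc |a t| ≤ C / t ^ 2 / e₀ :=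
        abs_le_div_of_abs_deriv_sub_mul_le he httin (fun s hs => hderiv s (hsub hs)) ha0
          fun s hs => (hbound s (hsub hs)).trans (by gcongr; exact hs.1)
    _ = C / e₀ / t ^ 2 := div_right_comm _ _ _
end

section
/- Let e₀ > 0 and let N : [T₀, ∞) → [0, ∞) be a C¹ function tending to 0 at infinity such that for all t ≥ T₀, |N'(t) + 2e₀ N(t)| ≤ e₀ N(t) whenever N(t) ≥ h(t), where h : [T₀,∞) → (0,∞) is continuous and decays slower than every exponential, i.e. for every κ > 0, e^{-κ t}/h(t) → 0 as t → ∞. Then there exists T₁ ≥ T₀ with N(T₁) < h(T₁). -/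
open Filter

theorem stmt10 (e₀ T₀ : ℝ) (he : 0 < e₀) (N N' h : ℝ → ℝ)
    (hNd : ∀ t, T₀ ≤ t → HasDerivAt N (N' t) t)
    (hN'c : ContinuousOn N' (Set.Ici T₀))
    (hNnn : ∀ t, T₀ ≤ t → 0 ≤ N t)
    (hN0 : Tendsto N atTop (nhds 0))
    (hhc : ContinuousOn h (Set.Ici T₀)) (hhpos : ∀ t, T₀ ≤ t → 0 < h t)
    (hslow : ∀ κ, 0 < κ → Tendsto (fun t => Real.exp (-κ * t) / h t) atTop (nhds 0))
    (hdiff : ∀ t, T₀ ≤ t → h t ≤ N t → |N' t + 2 * e₀ * N t| ≤ e₀ * N t) :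
    ∃ T₁, T₀ ≤ T₁ ∧ N T₁ < h T₁ := by
  by_contra hc
  push_neg at hc
  -- so h t ≤ N t for all t ≥ T₀
  have hhN : ∀ t, T₀ ≤ t → h t ≤ N t := hc
  have hderle : ∀ t, T₀ ≤ t → N' t ≤ -e₀ * N t := by
    intro t ht
    have := hdiff t ht (hhN t ht)
    have h1 := (abs_le.mp this).2
    nlinarith
  set g : ℝ → ℝ := fun s => N s * Real.exp (e₀ * s) with hg
  have hgd : ∀ t, T₀ ≤ t →
      HasDerivAt g (N' t * Real.exp (e₀ * t) + N t * (Real.exp (e₀ * t) * e₀)) t := by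
    intro t ht
    have : HasDerivAt (fun s => Real.exp (e₀ * s)) (Real.exp (e₀ * t) * e₀) t := by
      simpa using (((hasDerivAt_id t).const_mul e₀).exp)
    exact (hNd t ht).mul this
  have hganti : AntitoneOn g (Set.Ici T₀) := by
    apply antitoneOn_of_deriv_nonpos (convex_Ici T₀)
    · intro t ht
      exact (hgd t ht).continuousAt.continuousWithinAt
    · rw [interior_Ici]
      intro t ht
      exact (hgd t (le_of_lt ht)).differentiableAt.differentiableWithinAt
    · rw [interior_Ici]
      intro t ht
      rw [(hgd t (le_of_lt ht)).deriv]
      have h1 := hderle t (le_of_lt ht)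
      have h2 := Real.exp_pos (e₀ * t)
      nlinarith
  set C : ℝ := N T₀ * Real.exp (e₀ * T₀) with hC
  have hCpos : 0 < C := by
    have := lt_of_lt_of_le (hhpos T₀ le_rfl) (hhN T₀ le_rfl)
    positivity
  have hNle : ∀ t, T₀ ≤ t → h t ≤ C * Real.exp (-e₀ * t) := by
    intro t ht
    have h1 : g t ≤ g T₀ := hganti Set.self_mem_Ici ht ht
    have h2 : Real.exp (-e₀ * t) * Real.exp (e₀ * t) = 1 := by
      rw [← Real.exp_add]; ring_nf; exact Real.exp_zero
    have h3 := Real.exp_pos (e₀ * t)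
    have h4 := Real.exp_pos (-e₀ * t)
    have h5 := hhN t ht
    simp only [hg, hC] at h1 ⊢
    nlinarith
  have h1C : (0:ℝ) < 1 / C := by positivity
  have hev : ∀ᶠ t in atTop, Real.exp (-e₀ * t) / h t < 1 / C :=
    (hslow e₀ he).eventually (gt_mem_nhds h1C)
  obtain ⟨t, ht1, ht2⟩ := (hev.and (eventually_ge_atTop T₀)).exists
  have hhp := hhpos t ht2
  have hle := hNle t ht2
  have : 1 / C ≤ Real.exp (-e₀ * t) / h t := by
    rw [div_le_div_iff₀ hCpos hhp] at *
    nlinarith [Real.exp_pos (-e₀ * t)]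
  linarith
end

section
/- Let α² > 0, and let q, r : [T₀, ∞) → ℝ be C¹ with q(t) → ∞ as t → ∞ and r(t) → 0 as t → ∞. Suppose |r'(t) - 2α² r(t)/q(t)²| ≤ K₁ c / q(t)⁴ for all t ≥ T₀, with q(t) ≥ 1. Set K₀ = K₁/α². If additionally q is nondecreasing, then |r(t)| ≤ K₀ c / q(t)² for all t ≥ T₀. -/
open Filter

lemma aux13 (α K₁ c T₀ : ℝ) (hα : α ≠ 0) (hK : 0 < K₁) (hc : 0 < c)
    (q r r' : ℝ → ℝ)
    (hrd : ∀ t, T₀ ≤ t → HasDerivAt r (r' t) t)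
    (hq1 : ∀ t, T₀ ≤ t → 1 ≤ q t)
    (hr0 : Tendsto r atTop (nhds 0))
    (hmono : MonotoneOn q (Set.Ici T₀))
    (hineq : ∀ t, T₀ ≤ t → 2 * α ^ 2 * r t / q t ^ 2 - K₁ * c / q t ^ 4 ≤ r' t) :
    ∀ t, T₀ ≤ t → r t ≤ (K₁ / α ^ 2) * c / q t ^ 2 := by
  by_contra h
  push_neg at h
  obtain ⟨t₀, ht₀, hlt⟩ := h
  have hα2 : (0:ℝ) < α ^ 2 := by positivity
  have hq0 : (0:ℝ) < q t₀ := lt_of_lt_of_le zero_lt_one (hq1 t₀ ht₀)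
  set m := (K₁ / α ^ 2) * c / q t₀ ^ 2 with hm_def
  have hm : 0 < m := div_pos (mul_pos (div_pos hK hα2) hc) (pow_pos hq0 2)
  set S : Set ℝ := {t | t₀ ≤ t ∧ m ≤ r t} with hS_def
  -- S is bounded above
  obtain ⟨B, hB⟩ := (eventually_atTop.mp (hr0.eventually (gt_mem_nhds hm)))
  have hSsub : S ⊆ Set.Icc t₀ B := by
    rintro t ⟨h1, h2⟩
    refine ⟨h1, ?_⟩
    by_contra hBt
    push_neg at hBt
    exact absurd h2 (not_le.mpr (hB t hBt.le))
  -- S is closed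
  have hcont : ContinuousOn r (Set.Ici t₀) := fun t ht =>
    ((hrd t (le_trans ht₀ ht)).continuousAt).continuousWithinAt
  have hSclosed : IsClosed S := by
    have hEq : S = Set.Ici t₀ ∩ r ⁻¹' Set.Ici m := by
      ext t; simp [hS_def, Set.mem_Ici]
    rw [hEq]
    exact hcont.preimage_isClosed_of_isClosed isClosed_Ici isClosed_Ici
  have hScomp : IsCompact S := isCompact_Icc.of_isClosed_subset hSclosed hSsub
  have hne : S.Nonempty := ⟨t₀, le_refl _, le_of_lt hlt⟩
  set s := sSup S with hs_def
  have hsS : s ∈ S := hScomp.sSup_mem hne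
  have ht₀s : t₀ ≤ s := hsS.1
  have hmrs : m ≤ r s := hsS.2
  have hT₀s : T₀ ≤ s := le_trans ht₀ ht₀s
  have hbdd : BddAbove S := ⟨B, fun x hx => (hSsub hx).2⟩
  -- for t > s, r t < r s
  have hlt' : ∀ t, s < t → r t < r s := by
    intro t ht
    by_contra hge
    push_neg at hge
    have htS : t ∈ S := ⟨le_trans ht₀s ht.le, le_trans hmrs hge⟩
    exact absurd (le_csSup hbdd htS) (not_le.mpr ht)
  -- right derivative at s is ≤ 0
  have hd : HasDerivWithinAt r (r' s) (Set.Ioi s) s := (hrd s hT₀s).hasDerivWithinAt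
  have hslopeT := hasDerivWithinAt_iff_tendsto_slope.mp hd
  have hIoi : Set.Ioi s \ {s} = Set.Ioi s := Set.diff_singleton_eq_self (by simp)
  rw [hIoi] at hslopeT
  have hr'le : r' s ≤ 0 := by
    refine le_of_tendsto hslopeT ?_
    filter_upwards [self_mem_nhdsWithin] with t ht
    have h1 : r t < r s := hlt' t ht
    have h2 : (0:ℝ) < t - s := sub_pos.mpr ht
    rw [slope_def_field]
    exact div_nonpos_of_nonpos_of_nonneg (by linarith) h2.le
  -- but the differential inequality forces r' s > 0
  have hqs : 0 < q s := lt_of_lt_of_le zero_lt_one (hq1 s hT₀s)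
  have hqts : q t₀ ≤ q s := hmono (Set.mem_Ici.mpr ht₀) (Set.mem_Ici.mpr hT₀s) ht₀s
  have hqsq : q t₀ ^ 2 ≤ q s ^ 2 := by nlinarith
  have hmle : (K₁ / α ^ 2) * c / q s ^ 2 ≤ m := by
    rw [hm_def]
    gcongr
  have hrs : (K₁ / α ^ 2) * c / q s ^ 2 ≤ r s := le_trans hmle hmrs
  have key := hineq s hT₀s
  have h3 : 2 * α ^ 2 * ((K₁ / α ^ 2) * c / q s ^ 2) / q s ^ 2 ≤
      2 * α ^ 2 * r s / q s ^ 2 := by gcongr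
  have e : 2 * α ^ 2 * ((K₁ / α ^ 2) * c / q s ^ 2) / q s ^ 2 = 2 * (K₁ * c / q s ^ 4) := by
    field_simp
  rw [e] at h3
  have hpos : 0 < K₁ * c / q s ^ 4 := by positivity
  linarith

theorem stmt13 (α K₁ c T₀ : ℝ) (hα : α ≠ 0) (hK : 0 < K₁) (hc : 0 < c)
    (q r q' r' : ℝ → ℝ)
    (hqd : ∀ t, T₀ ≤ t → HasDerivAt q (q' t) t)
    (hrd : ∀ t, T₀ ≤ t → HasDerivAt r (r' t) t)
    (hq1 : ∀ t, T₀ ≤ t → 1 ≤ q t)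
    (hqinf : Tendsto q atTop atTop)
    (hr0 : Tendsto r atTop (nhds 0))
    (hmono : MonotoneOn q (Set.Ici T₀))
    (hineq : ∀ t, T₀ ≤ t → |r' t - 2 * α ^ 2 * r t / q t ^ 2| ≤ K₁ * c / q t ^ 4) :
    ∀ t, T₀ ≤ t → |r t| ≤ (K₁ / α ^ 2) * c / q t ^ 2 := by
  have h1 := aux13 α K₁ c T₀ hα hK hc q r r' hrd hq1 hr0 hmono (fun t ht => by
    have h := (abs_le.mp (hineq t ht)).1
    linarith)
  have h2 := aux13 α K₁ c T₀ hα hK hc q (fun t => -r t) (fun t => -r' t)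
    (fun t ht => (hrd t ht).neg) hq1 (by simpa using hr0.neg) hmono
    (fun t ht => by
      have h := (abs_le.mp (hineq t ht)).2
      show 2 * α ^ 2 * (-r t) / q t ^ 2 - K₁ * c / q t ^ 4 ≤ -r' t
      have e : 2 * α ^ 2 * (-r t) / q t ^ 2 = -(2 * α ^ 2 * r t / q t ^ 2) := by ring
      rw [e]
      linarith)
  intro t ht
  rw [abs_le]
  refine ⟨?_, h1 t ht⟩
  have := h2 t ht
  linarith
end

section
/- Let Q : ℝ → ℝ be C¹, positive, with Q(y) = κ₀/y² + O(1/y⁴) as |y| → ∞ for some κ₀ > 0. Fix i ≠ j and real x_i, x_j with x_{ij} := x_i - x_j satisfying |x_{ij}| ≥ 2. Then for all y with |y - x_i| ≤ |x_{ij}|/3, one has |Q(y - x_j) - κ₀/x_{ij}² + 2κ₀ (y - x_i)/x_{ij}³| ≤ C (1 + (y - x_i)²)/|x_{ij}|⁴, with C depending only on Q. -/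
/-! Write `x = xi - xj` and `u = y - xi`, so that `y - xj = x + u` and `|x + u| ≥ 2|x|/3`.
When `|x| ≥ 3R/2` the tail hypothesis replaces `Q (x + u)` by `κ₀ / (x + u)²` at a cost
`O(|x|⁻⁴)`, and the first-order Taylor remainder of `κ₀ / (x + u)²` at `x` is exactly
`κ₀ u² (3x + 2u) / (x³ (x + u)²) = O(u² |x|⁻⁴)`. When `2 ≤ |x| ≤ 3R/2`, continuity bounds `Q`
on a compact interval, so every term is `O(1) = O(|x|⁻⁴)`. -/

section

variable {x u : ℝ}

lemma two_thirds_abs_le_abs_add (hu : |u| ≤ |x| / 3) : 2 * |x| / 3 ≤ |x + u| := by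
  have := abs_sub (x + u) u
  rw [add_sub_cancel_right] at this
  linarith

lemma abs_add_le_four_thirds_abs (hu : |u| ≤ |x| / 3) : |x + u| ≤ 4 * |x| / 3 := by
  linarith [abs_add_le x u]

lemma inv_sq_sub_taylor (κ : ℝ) (hx : x ≠ 0) (hxu : x + u ≠ 0) :
    κ / (x + u) ^ 2 - κ / x ^ 2 + 2 * κ * u / x ^ 3
      = κ * (u ^ 2 * (3 * x + 2 * u)) / (x ^ 3 * (x + u) ^ 2) := by
  field_simp
  ring

lemma abs_inv_sq_sub_taylor_le (κ : ℝ) (hx : x ≠ 0) (hu : |u| ≤ |x| / 3) :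
    |κ / (x + u) ^ 2 - κ / x ^ 2 + 2 * κ * u / x ^ 3| ≤ 9 * |κ| * u ^ 2 / |x| ^ 4 := by
  have hxu := two_thirds_abs_le_abs_add hu
  have hxu0 : x + u ≠ 0 := abs_pos.1 (by linarith [abs_pos.2 hx])
  have hnum : |3 * x + 2 * u| ≤ 11 * |x| / 3 := by
    have := abs_add_le (3 * x) (2 * u)
    rw [abs_mul 3, abs_mul 2, abs_of_pos (three_pos : (0 : ℝ) < 3), abs_two] at this
    linarith
  rw [inv_sq_sub_taylor κ hx hxu0]
  simp only [abs_div, abs_mul, abs_pow]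
  calc |κ| * (|u| ^ 2 * |3 * x + 2 * u|) / (|x| ^ 3 * |x + u| ^ 2)
      ≤ |κ| * (|u| ^ 2 * (11 * |x| / 3)) / (|x| ^ 3 * (2 * |x| / 3) ^ 2) := by gcongr
    _ = 33 / 4 * |κ| * u ^ 2 / |x| ^ 4 := by field_simp; rw [sq_abs]; ring
    _ ≤ 9 * |κ| * u ^ 2 / |x| ^ 4 := by gcongr; norm_num

lemma abs_expansion_le_of_tail {Q : ℝ → ℝ} {κ C₁ R : ℝ}
    (htail : ∀ y : ℝ, R ≤ |y| → |Q y - κ / y ^ 2| ≤ C₁ / y ^ 4)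
    (hx : x ≠ 0) (hxR : 3 * R / 2 ≤ |x|) (hu : |u| ≤ |x| / 3) :
    |Q (x + u) - κ / x ^ 2 + 2 * κ * u / x ^ 3| ≤ (6 * |C₁| + 9 * |κ|) * (1 + u ^ 2) / |x| ^ 4 := by
  have hxu := two_thirds_abs_le_abs_add hu
  have htail_xu : |Q (x + u) - κ / (x + u) ^ 2| ≤ 6 * |C₁| / |x| ^ 4 :=
    calc |Q (x + u) - κ / (x + u) ^ 2|
        ≤ C₁ / (x + u) ^ 4 := htail _ (by linarith)
      _ ≤ |C₁| / |x + u| ^ 4 := by rw [← abs_pow, ← abs_div]; exact le_abs_self _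
      _ ≤ |C₁| / (2 * |x| / 3) ^ 4 := by gcongr
      _ = 81 / 16 * |C₁| / |x| ^ 4 := by rw [div_pow, mul_pow]; ring
      _ ≤ 6 * |C₁| / |x| ^ 4 := by gcongr; norm_num
  calc |Q (x + u) - κ / x ^ 2 + 2 * κ * u / x ^ 3|
      = |(Q (x + u) - κ / (x + u) ^ 2) + (κ / (x + u) ^ 2 - κ / x ^ 2 + 2 * κ * u / x ^ 3)| := by
        ring_nf
    _ ≤ 6 * |C₁| / |x| ^ 4 + 9 * |κ| * u ^ 2 / |x| ^ 4 :=
        (abs_add_le _ _).trans (add_le_add htail_xu (abs_inv_sq_sub_taylor_le κ hx hu))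
    _ ≤ (6 * |C₁| + 9 * |κ|) * (1 + u ^ 2) / |x| ^ 4 := by
        rw [← add_div]
        gcongr
        nlinarith [abs_nonneg C₁, abs_nonneg κ, sq_nonneg u]

lemma abs_expansion_le_of_bound {Q : ℝ → ℝ} {κ M K : ℝ}
    (hM : ∀ z : ℝ, |z| ≤ 4 * K / 3 → |Q z| ≤ M)
    (hx : 2 ≤ |x|) (hxK : |x| ≤ K) (hu : |u| ≤ |x| / 3) :
    |Q (x + u) - κ / x ^ 2 + 2 * κ * u / x ^ 3| ≤ (M + |κ|) * K ^ 4 * (1 + u ^ 2) / |x| ^ 4 := by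
  have hx0 : 0 < |x| := by linarith
  have hx2 : 4 ≤ |x| ^ 2 := by nlinarith
  have hQ : |Q (x + u)| ≤ M := hM _ (by linarith [abs_add_le_four_thirds_abs hu])
  have hlead : |κ / x ^ 2| ≤ |κ| / 4 := by
    rw [abs_div, abs_pow]
    gcongr
  have hlin : |2 * κ * u / x ^ 3| ≤ |κ| / 6 :=
    calc |2 * κ * u / x ^ 3|
        = 2 * |κ| * |u| / |x| ^ 3 := by rw [abs_div, abs_mul, abs_mul, abs_two, abs_pow]
      _ ≤ 2 * |κ| * (|x| / 3) / |x| ^ 3 := by gcongr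
      _ = 2 * |κ| / (3 * |x| ^ 2) := by field_simp
      _ ≤ 2 * |κ| / (3 * 4) := by gcongr
      _ = |κ| / 6 := by ring
  have hbound : |Q (x + u) - κ / x ^ 2 + 2 * κ * u / x ^ 3| ≤ M + |κ| := by
    linarith [abs_add_le (Q (x + u) - κ / x ^ 2) (2 * κ * u / x ^ 3),
      abs_sub (Q (x + u)) (κ / x ^ 2), abs_nonneg κ]
  have hA : 0 ≤ M + |κ| := by linarith [abs_nonneg (Q (x + u)), abs_nonneg κ]
  have hK4 : |x| ^ 4 ≤ K ^ 4 := pow_le_pow_left₀ hx0.le hxK 4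
  calc |Q (x + u) - κ / x ^ 2 + 2 * κ * u / x ^ 3| ≤ M + |κ| := hbound
    _ ≤ (M + |κ|) * K ^ 4 * (1 + u ^ 2) / |x| ^ 4 := by
      rw [le_div_iff₀ (by positivity)]
      nlinarith [mul_le_mul_of_nonneg_left hK4 hA,
        mul_nonneg (mul_nonneg hA (pow_nonneg (hx0.le.trans hxK) 4)) (sq_nonneg u)]

end

theorem stmt18_general (Q Q' : ℝ → ℝ) (κ₀ C₁ R : ℝ)
    (hQ : ∀ y, HasDerivAt Q (Q' y) y)
    (htail : ∀ y : ℝ, R ≤ |y| → |Q y - κ₀ / y ^ 2| ≤ C₁ / y ^ 4) :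
    ∃ C > 0, ∀ xi xj : ℝ, 2 ≤ |xi - xj| → ∀ y : ℝ, |y - xi| ≤ |xi - xj| / 3 →
      |Q (y - xj) - κ₀ / (xi - xj) ^ 2 + 2 * κ₀ * (y - xi) / (xi - xj) ^ 3|
        ≤ C * (1 + (y - xi) ^ 2) / |xi - xj| ^ 4 := by
  have hQc : Continuous Q := continuous_iff_continuousAt.2 fun y => (hQ y).continuousAt
  obtain ⟨M, hM⟩ :=
    (isCompact_closedBall (0 : ℝ) (2 * R)).exists_bound_of_continuousOn hQc.continuousOn
  have hM' : ∀ z : ℝ, |z| ≤ 4 * (3 * R / 2) / 3 → |Q z| ≤ M := fun z hz =>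
    hM z (mem_closedBall_zero_iff.2 (by rw [Real.norm_eq_abs]; linarith))
  set A := 6 * |C₁| + 9 * |κ₀|
  set B := (M + |κ₀|) * (3 * R / 2) ^ 4
  refine ⟨max A B + 1, by positivity, fun xi xj hx y hy => ?_⟩
  rw [show y - xj = (xi - xj) + (y - xi) by ring]
  rcases le_or_gt (3 * R / 2) |xi - xj| with hfar | hnear
  · calc _ ≤ A * (1 + (y - xi) ^ 2) / |xi - xj| ^ 4 :=
          abs_expansion_le_of_tail htail (abs_pos.1 (by linarith)) hfar hy
      _ ≤ _ := by gcongr; linarith [le_max_left A B]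
  · calc _ ≤ B * (1 + (y - xi) ^ 2) / |xi - xj| ^ 4 :=
          abs_expansion_le_of_bound hM' hx hnear.le hy
      _ ≤ _ := by gcongr; linarith [le_max_right A B]

theorem stmt18 (Q Q' : ℝ → ℝ) (κ₀ C₁ R : ℝ) (hκ : 0 < κ₀)
    (hQ : ∀ y, HasDerivAt Q (Q' y) y) (hQpos : ∀ y, 0 < Q y)
    (htail : ∀ y : ℝ, R ≤ |y| → |Q y - κ₀ / y ^ 2| ≤ C₁ / y ^ 4) :
    ∃ C > 0, ∀ xi xj : ℝ, 2 ≤ |xi - xj| → ∀ y : ℝ, |y - xi| ≤ |xi - xj| / 3 →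
      |Q (y - xj) - κ₀ / (xi - xj) ^ 2 + 2 * κ₀ * (y - xi) / (xi - xj) ^ 3|
        ≤ C * (1 + (y - xi) ^ 2) / |xi - xj| ^ 4 :=
  stmt18_general Q Q' κ₀ C₁ R hQ htail
end
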